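/- arXiv:2309.11785 — 6 statements merged into one kernel-verified Lean document; each statement's English description precedes it below -/
import Mathlib

section
/- Let $v, a_1, a_2, f_1, f_2$ be positive real numbers with $a_1 + a_2 < v$. If $f_2 \cdot a_1 (v - a_1) \geq f_1 \cdot a_2 (v - a_2)$, then $\frac{f_1 + f_2}{(a_1+a_2)(v - a_1 - a_2)} > \frac{f_1}{a_1(v - a_1)}$. -/
theorem stmt0 (v a1 a2 f1 f2 : ℝ) (hv : 0 < v) (ha1 : 0 < a1) (ha2 : 0 < a2)
    (hf1 : 0 < f1) (hf2 : 0 < f2) (hsum : a1 + a2 < v)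
    (h : f2 * (a1 * (v - a1)) ≥ f1 * (a2 * (v - a2))) :
    (f1 + f2) / ((a1 + a2) * (v - a1 - a2)) > f1 / (a1 * (v - a1)) := by
  have hD : 0 < (a1 + a2) * (v - a1 - a2) :=
    mul_pos (by linarith) (by linarith)
  have hD1 : 0 < a1 * (v - a1) := mul_pos ha1 (by linarith)
  rw [gt_iff_lt, div_lt_div_iff₀ hD1 hD]
  nlinarith [mul_pos ha1 ha2, mul_pos (mul_pos ha1 ha2) hf1]
end

section
/- Let $X$ be a finite connected pure 2-dimensional simplicial complex with vertex set $V$, and regard its 1-skeleton as a graph $G_V$. Suppose $A$ is a nonempty proper subset of $V$ attaining the minimum in $H(X) = \min_{0 < |A| < |V|} \frac{|V| \cdot |F(A, V \setminus A)|}{|A| \cdot |V \setminus A|}$. Then the subgraph of $G_V$ induced by $A$ is connected. -/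
open scoped Classical

/-- The 1-skeleton of a pure simplicial complex given by its top-dimensional faces:
two vertices are adjacent iff they are distinct and lie in a common face. -/
def skeleton {V : Type*} (faces : Finset (Finset V)) : SimpleGraph V where
  Adj u v := u ≠ v ∧ ∃ f ∈ faces, u ∈ f ∧ v ∈ f
  symm := by
    constructor
    rintro u v ⟨h, f, hf, hu, hv⟩
    exact ⟨h.symm, f, hf, hv, hu⟩
  loopless := by
    constructor
    rintro v ⟨h, -⟩
    exact h rfl

/-!
If `A` were the union of two nonempty parts `A₁`, `A₂` with no edge between them, no face could
meet both, so the cut faces of `A` are the disjoint union of those of `A₁` and of `A₂`: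
`e = e₁ + e₂`. On the other hand `a₁ (n - a₁) + a₂ (n - a₂) = a (n - a) + 2 a₁ a₂`. Since `X` is
connected, `e > 0`, and then one of `e_i / (a_i (n - a_i))` is strictly below `e / (a (n - a))`,
contradicting the minimality of `A`.
-/

open Finset

namespace SimpleGraph

variable {V : Type*} {G : SimpleGraph V}

lemma exists_separation_of_not_preconnected_induce [DecidableEq V] {A : Finset V}
    (h : ¬ (G.induce (A : Set V)).Preconnected) :
    ∃ A₁ ⊆ A, A₁.Nonempty ∧ (A \ A₁).Nonempty ∧ ∀ a ∈ A₁, ∀ b ∈ A \ A₁, ¬ G.Adj a b := by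
  obtain ⟨u, w, huw⟩ : ∃ u w, ¬ (G.induce (A : Set V)).Reachable u w := by
    simpa [Preconnected] using h
  set A₁ := A.filter fun a => ∃ ha : a ∈ A, (G.induce (A : Set V)).Reachable u ⟨a, ha⟩
  refine ⟨A₁, filter_subset _ _, ⟨u, mem_filter.2 ⟨u.2, u.2, .rfl⟩⟩,
    ⟨w, mem_sdiff.2 ⟨w.2, fun hw => huw (mem_filter.1 hw).2.2⟩⟩, ?_⟩
  intro a ha b hb hab
  obtain ⟨-, haA, hua⟩ := mem_filter.1 ha
  obtain ⟨hbA, hbA₁⟩ := mem_sdiff.1 hb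
  have hab' : (G.induce (A : Set V)).Adj ⟨a, haA⟩ ⟨b, hbA⟩ := hab
  exact hbA₁ (mem_filter.2 ⟨hbA, hbA, hua.trans hab'.reachable⟩)

end SimpleGraph

section CutFaces

variable {V : Type*} [DecidableEq V]

/-- The set $F(A, V \setminus A)$. -/
def cutFaces (faces : Finset (Finset V)) (A : Finset V) : Finset (Finset V) :=
  faces.filter fun f => (∃ v ∈ f, v ∈ A) ∧ (∃ v ∈ f, v ∉ A)

lemma cutFaces_nonempty [Fintype V] {faces : Finset (Finset V)}
    (hconn : (skeleton faces).Connected) {A : Finset V} (hA : A.Nonempty) (hA' : A ≠ univ) :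
    (cutFaces faces A).Nonempty := by
  obtain ⟨x, hx⟩ := hA
  obtain ⟨y, hy⟩ : ∃ y, y ∉ A := by simpa [eq_univ_iff_forall] using hA'
  obtain ⟨d, -, hd, hd'⟩ := (hconn.preconnected x y).some.exists_boundary_dart (A : Set V) hx hy
  obtain ⟨-, f, hf, hff, hfs⟩ := d.adj
  exact ⟨f, mem_filter.2 ⟨hf, ⟨_, hff, hd⟩, ⟨_, hfs, hd'⟩⟩⟩

lemma card_cutFaces_eq_add {faces : Finset (Finset V)} {A A₁ : Finset V} (hA₁ : A₁ ⊆ A)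
    (hsep : ∀ a ∈ A₁, ∀ b ∈ A \ A₁, ¬ (skeleton faces).Adj a b) :
    #(cutFaces faces A) = #(cutFaces faces A₁) + #(cutFaces faces (A \ A₁)) := by
  have hface : ∀ f ∈ faces, ∀ a ∈ f, ∀ b ∈ f, a ∈ A₁ → b ∈ A → b ∉ A₁ → False :=
    fun f hf a ha b hb haA₁ hbA hbA₁ =>
      hsep a haA₁ b (mem_sdiff.2 ⟨hbA, hbA₁⟩) ⟨by rintro rfl; exact hbA₁ haA₁, f, hf, ha, hb⟩
  have hsplit : cutFaces faces A = faces.filter fun f =>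
      ((∃ v ∈ f, v ∈ A₁) ∧ (∃ v ∈ f, v ∉ A₁)) ∨
        ((∃ v ∈ f, v ∈ A \ A₁) ∧ (∃ v ∈ f, v ∉ A \ A₁)) := by
    refine filter_congr fun f hf => ?_
    have := hface f hf
    simp only [mem_sdiff]
    grind
  rw [hsplit, filter_or, card_union_of_disjoint]
  · rfl
  · refine disjoint_filter.2 fun f hf ⟨⟨a, ha, haA₁⟩, _⟩ ⟨⟨b, hb, hbA⟩, _⟩ => ?_
    exact hface f hf a ha b hb haA₁ (mem_sdiff.1 hbA).1 (mem_sdiff.1 hbA).2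

end CutFaces

/-- The quantity minimised in $H(X)$, for `n = |V|`, `a = |A|` and
`e = |F(A, V \setminus A)|`. -/
noncomputable def expansionRatio (n a e : ℝ) : ℝ := n * e / (a * (n - a))

lemma min_expansionRatio_lt_add {n a₁ a₂ e₁ e₂ : ℝ} (ha₁ : 0 < a₁) (ha₂ : 0 < a₂)
    (hn : a₁ + a₂ < n) (he : 0 < e₁ + e₂) :
    min (expansionRatio n a₁ e₁) (expansionRatio n a₂ e₂) <
      expansionRatio n (a₁ + a₂) (e₁ + e₂) := by
  by_contra! h
  have hn₁ : 0 < n - a₁ := by linarith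
  have hn₂ : 0 < n - a₂ := by linarith
  have hn₁₂ : 0 < n - (a₁ + a₂) := by linarith
  obtain ⟨h₁, h₂⟩ := le_min_iff.1 h
  simp only [expansionRatio] at h₁ h₂
  rw [div_le_div_iff₀ (by positivity) (by positivity)] at h₁ h₂
  -- summing `h₁` and `h₂` leaves `2 n e a₁ a₂ ≤ 0`
  nlinarith [mul_pos (mul_pos (by linarith : 0 < n) he) (mul_pos ha₁ ha₂)]

theorem stmt8_general {V : Type*} [Fintype V] [DecidableEq V]
    (faces : Finset (Finset V))
    (hconn : (skeleton faces).Connected)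
    (A : Finset V) (hA1 : 0 < A.card) (hA2 : A.card < Fintype.card V)
    (hmin : ∀ A' : Finset V, 0 < A'.card → A'.card < Fintype.card V →
      ((Fintype.card V : ℝ) *
          ((faces.filter (fun f => (∃ v ∈ f, v ∈ A) ∧ (∃ v ∈ f, v ∉ A))).card : ℝ)) /
        ((A.card : ℝ) * ((Fintype.card V : ℝ) - (A.card : ℝ))) ≤
      ((Fintype.card V : ℝ) *
          ((faces.filter (fun f => (∃ v ∈ f, v ∈ A') ∧ (∃ v ∈ f, v ∉ A'))).card : ℝ)) /
        ((A'.card : ℝ) * ((Fintype.card V : ℝ) - (A'.card : ℝ)))) :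
    ((skeleton faces).induce (↑A : Set V)).Connected := by
  have hA : A.Nonempty := card_pos.1 hA1
  refine (SimpleGraph.connected_iff _).2 ⟨?_, hA.coe_sort⟩
  by_contra hpre
  obtain ⟨A₁, hA₁A, hA₁, hA₂, hsep⟩ :=
    SimpleGraph.exists_separation_of_not_preconnected_induce hpre
  have hcut := cutFaces_nonempty hconn hA (by rintro rfl; simp at hA2)
  have hcard : #A = #A₁ + #(A \ A₁) := by
    rw [← card_sdiff_add_card_eq_card hA₁A, add_comm]
  have h₁ : expansionRatio _ _ _ ≤ expansionRatio _ _ _ :=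
    hmin A₁ hA₁.card_pos ((card_le_card hA₁A).trans_lt hA2)
  have h₂ : expansionRatio _ _ _ ≤ expansionRatio _ _ _ :=
    hmin (A \ A₁) hA₂.card_pos ((card_le_card sdiff_subset).trans_lt hA2)
  have hsplit := card_cutFaces_eq_add hA₁A hsep
  have hlt := min_expansionRatio_lt_add (n := Fintype.card V)
    (e₁ := #(cutFaces faces A₁)) (e₂ := #(cutFaces faces (A \ A₁)))
    (Nat.cast_pos.2 hA₁.card_pos) (Nat.cast_pos.2 hA₂.card_pos)
    (by exact_mod_cast hcard ▸ hA2) (by exact_mod_cast hsplit ▸ hcut.card_pos)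
  rw [← Nat.cast_add, ← Nat.cast_add, ← hcard, ← hsplit] at hlt
  exact hlt.not_ge (le_min h₁ h₂)

theorem stmt8 {V : Type*} [Fintype V] [DecidableEq V]
    (faces : Finset (Finset V))
    (hpure : ∀ f ∈ faces, f.card = 3)
    (hcover : ∀ v : V, ∃ f ∈ faces, v ∈ f)
    (hconn : (skeleton faces).Connected)
    (A : Finset V) (hA1 : 0 < A.card) (hA2 : A.card < Fintype.card V)
    (hmin : ∀ A' : Finset V, 0 < A'.card → A'.card < Fintype.card V →
      ((Fintype.card V : ℝ) *
          ((faces.filter (fun f => (∃ v ∈ f, v ∈ A) ∧ (∃ v ∈ f, v ∉ A))).card : ℝ)) /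
        ((A.card : ℝ) * ((Fintype.card V : ℝ) - (A.card : ℝ))) ≤
      ((Fintype.card V : ℝ) *
          ((faces.filter (fun f => (∃ v ∈ f, v ∈ A') ∧ (∃ v ∈ f, v ∉ A'))).card : ℝ)) /
        ((A'.card : ℝ) * ((Fintype.card V : ℝ) - (A'.card : ℝ)))) :
    ((skeleton faces).induce (↑A : Set V)).Connected :=
  stmt8_general faces hconn A hA1 hA2 hmin
end

section
/- Let $X$ be a finite connected pure $n$-dimensional simplicial complex with $n > 2$, vertex set $V$, in which every $(n-1)$-face is contained in exactly $D$ $n$-faces. Let $W$ be the set of $(n-1)$-faces, $\delta_{min}$ the minimum over $v \in V$ of the number of $(n-1)$-faces containing $v$, $k = \lfloor (n+1)/2 \rfloor$, and $\lambda$ the second largest adjacency eigenvalue of the embedded graph (two $(n-1)$-faces adjacent iff they lie in a common $n$-face). Then $\frac{2 \delta_{min} (nD - \lambda)}{|W| \cdot n \cdot k \cdot (n+1-k)} \leq H(X)$. -/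
open scoped Classical

noncomputable section

/-- The embedded graph: vertices are the `(n-1)`-faces (the members of `W`), two of them
adjacent iff they are distinct and lie in a common top-dimensional face. -/
def embedded {V : Type*} (faces : Finset (Finset V)) (W : Finset (Finset V)) :
    SimpleGraph {w // w ∈ W} where
  Adj w w' := w ≠ w' ∧ ∃ f ∈ faces, (w : Finset V) ⊆ f ∧ (w' : Finset V) ⊆ f
  symm := by
    constructor
    rintro w w' ⟨h, f, hf, hw, hw'⟩
    exact ⟨h.symm, f, hf, hw', hw⟩
  loopless := by
    constructor
    rintro w ⟨h, -⟩
    exact h rfl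

/-- Adjacency matrix of the embedded graph. -/
def embeddedAdjMatrix {V : Type*} (faces : Finset (Finset V)) (W : Finset (Finset V)) :
    Matrix {w // w ∈ W} {w // w ∈ W} ℝ :=
  fun w w' => if (embedded faces W).Adj w w' then 1 else 0

/-!
Crude bounds suffice. Every eigenvalue of the embedded graph has modulus at most its maximal
degree `n * D` (Gershgorin), so `n * D - λ ≤ 2 * n * D`; double counting gives
`δmin * |V| ≤ n * |W|`; `n ≤ k * (n + 1 - k)`; and `4 * |A| * |V \ A| ≤ |V| ^ 2`. What remains is
that every proper cut `A` is crossed by at least `D` faces: by connectivity some face meets both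
sides, and an `(n-1)`-face of it containing a vertex on each side lies only in crossing faces.
-/

open Finset

theorem SimpleGraph.abs_le_of_hasEigenvalue_adjMatrix {V : Type*} [Fintype V] [DecidableEq V]
    (G : SimpleGraph V) [DecidableRel G.Adj] {d : ℕ} (hd : ∀ v, G.degree v ≤ d) {μ : ℝ}
    (hμ : Module.End.HasEigenvalue (Matrix.toLin' (G.adjMatrix ℝ)) μ) : |μ| ≤ d := by
  obtain ⟨v, hv⟩ := eigenvalue_mem_ball hμ
  rw [Metric.mem_closedBall, SimpleGraph.adjMatrix_apply, if_neg (G.loopless.irrefl v),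
    Real.dist_0_eq_abs] at hv
  have hnonneg : ∀ j, 0 ≤ G.adjMatrix ℝ v j := fun j => by
    rw [SimpleGraph.adjMatrix_apply]; split_ifs <;> norm_num
  calc |μ| ≤ ∑ j ∈ univ.erase v, ‖G.adjMatrix ℝ v j‖ := hv
    _ = ∑ j ∈ univ.erase v, G.adjMatrix ℝ v j :=
        sum_congr rfl fun j _ => Real.norm_of_nonneg (hnonneg j)
    _ ≤ ∑ j, G.adjMatrix ℝ v j := sum_le_univ_sum_of_nonneg hnonneg
    _ = G.degree v := by
        simp [SimpleGraph.adjMatrix_apply, sum_boole, ← SimpleGraph.card_neighborFinset_eq_degree,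
          SimpleGraph.neighborFinset_eq_filter]
    _ ≤ d := by exact_mod_cast hd v

section SimplicialComplex

variable {V : Type*} [DecidableEq V] {faces W : Finset (Finset V)} {n D : ℕ}

/-- A neighbour of the `(n-1)`-face `w` is another `n`-subset of one of the `D` faces
through `w`. -/
theorem embedded_degree_le (hpure : ∀ f ∈ faces, #f = n + 1) (hW : ∀ e ∈ W, #e = n)
    (hD : ∀ e ∈ W, #(faces.filter (fun f => e ⊆ f)) = D) (w : {w // w ∈ W}) :
    (embedded faces W).degree w ≤ n * D := by
  set cofaces := faces.filter (fun f => (w : Finset V) ⊆ f)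
  have hmaps : ∀ w' ∈ (embedded faces W).neighborFinset w,
      (w' : Finset V) ∈ cofaces.biUnion (fun f => (f.powersetCard n).erase w) := by
    intro w' hw'
    obtain ⟨hne, f, hf, hwf, hw'f⟩ := (SimpleGraph.mem_neighborFinset _ _ _).1 hw'
    exact mem_biUnion.2 ⟨f, mem_filter.2 ⟨hf, hwf⟩, mem_erase.2
      ⟨fun h => hne (Subtype.ext h.symm), mem_powersetCard.2 ⟨hw'f, hW _ w'.2⟩⟩⟩
  have hcard : ∀ f ∈ cofaces, #((f.powersetCard n).erase w) = n := by
    intro f hf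
    obtain ⟨hf, hwf⟩ := mem_filter.1 hf
    rw [card_erase_of_mem (mem_powersetCard.2 ⟨hwf, hW _ w.2⟩), card_powersetCard, hpure f hf,
      Nat.choose_succ_self_right, Nat.add_sub_cancel]
  calc (embedded faces W).degree w
      ≤ #(cofaces.biUnion (fun f => (f.powersetCard n).erase w)) := by
        rw [← SimpleGraph.card_neighborFinset_eq_degree]
        exact card_le_card_of_injOn _ hmaps Subtype.coe_injective.injOn
    _ ≤ ∑ f ∈ cofaces, #((f.powersetCard n).erase w) := card_biUnion_le
    _ = n * D := by rw [sum_congr rfl hcard, sum_const, hD _ w.2, smul_eq_mul, mul_comm]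

theorem exists_ridge_cofaces_subset_crossing (hn : 2 ≤ n) (hpure : ∀ f ∈ faces, #f = n + 1)
    (hW : ∀ f ∈ faces, ∀ e ⊆ f, #e = n → e ∈ W) (hconn : (skeleton faces).Connected)
    {A : Finset V} {a b : V} (ha : a ∈ A) (hb : b ∉ A) :
    ∃ e ∈ W, faces.filter (fun f => e ⊆ f) ⊆
      faces.filter (fun f => (∃ v ∈ f, v ∈ A) ∧ (∃ v ∈ f, v ∉ A)) := by
  obtain ⟨p⟩ := hconn.preconnected a b
  obtain ⟨d, -, hd, hd'⟩ := p.exists_boundary_dart A ha hb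
  obtain ⟨-, f, hf, hu, hu'⟩ := d.adj
  obtain ⟨e, hue, hef, he⟩ :=
    exists_subsuperset_card_eq (insert_subset hu (singleton_subset_iff.2 hu'))
      (card_le_two.trans hn) (by rw [hpure f hf]; omega)
  refine ⟨e, hW f hf e hef he, fun g hg => ?_⟩
  obtain ⟨hg, heg⟩ := mem_filter.1 hg
  exact mem_filter.2 ⟨hg, ⟨_, heg (hue (mem_insert_self _ _)), hd⟩,
    ⟨_, heg (hue (mem_insert_of_mem (mem_singleton_self _))), hd'⟩⟩

end SimplicialComplex

theorem spectral_bound_le_cut_ratio {δ N w n D lam F a κ : ℝ} (ha : 0 < a) (haN : a < N)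
    (hw : 0 < w) (hn : 0 < n) (hκ : n ≤ κ) (hδ0 : 0 ≤ δ) (hδ : N * δ ≤ w * n) (hD0 : 0 ≤ D)
    (hDF : D ≤ F)
    (hlam : -lam ≤ n * D) :
    2 * δ * (n * D - lam) / (w * n * κ) ≤ N * F / (a * (N - a)) := by
  have hκ0 : 0 < κ := hn.trans_le hκ
  have hN : 0 < N := ha.trans haN
  have hcut0 : 0 ≤ a * (N - a) := (mul_pos ha (sub_pos.2 haN)).le
  rw [div_le_div_iff₀ (by positivity) (mul_pos ha (sub_pos.2 haN))]
  calc 2 * δ * (n * D - lam) * (a * (N - a))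
      ≤ 4 * δ * n * D * (a * (N - a)) := mul_le_mul_of_nonneg_right (by nlinarith) hcut0
    _ ≤ δ * n * D * (N * N) := by
        nlinarith [sq_nonneg (N - 2 * a), mul_nonneg (mul_nonneg hδ0 hn.le) hD0]
    _ = N * δ * (n * D * N) := by ring
    _ ≤ w * n * (n * D * N) := by gcongr
    _ = w * n * N * (n * D) := by ring
    _ ≤ w * n * N * (κ * F) := by gcongr
    _ = N * F * (w * n * κ) := by ring

theorem stmt10 {V : Type*} [Fintype V] [DecidableEq V]
    (n : ℕ) (hn : 2 < n)
    (faces : Finset (Finset V))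
    (hpure : ∀ f ∈ faces, f.card = n + 1)
    (hcover : ∀ v : V, ∃ f ∈ faces, v ∈ f)
    (hconn : (skeleton faces).Connected)
    (W : Finset (Finset V))
    (hW : W = ((Finset.univ : Finset V).powersetCard n).filter
      (fun e => ∃ f ∈ faces, e ⊆ f))
    (k : ℕ) (hk : k = (n + 1) / 2)
    (D : ℕ) (hD : ∀ e ∈ W, (faces.filter (fun f => e ⊆ f)).card = D)
    (δmin : ℕ)
    (hδ : IsLeast {m : ℕ | ∃ v : V, m = (W.filter (fun e => v ∈ e)).card} δmin)
    (lam : ℝ)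
    (hlam : IsGreatest {μ : ℝ |
      Module.End.HasEigenvalue (Matrix.toLin' (embeddedAdjMatrix faces W)) μ ∧
      μ < (n : ℝ) * (D : ℝ)} lam) :
    (2 * (δmin : ℝ) * ((n : ℝ) * (D : ℝ) - lam)) /
      ((W.card : ℝ) * (n : ℝ) * (k : ℝ) * ((n : ℝ) + 1 - (k : ℝ))) ≤
    sInf {x : ℝ | ∃ A : Finset V, 0 < A.card ∧ A.card < Fintype.card V ∧
      x = ((Fintype.card V : ℝ) *
          ((faces.filter (fun f => (∃ v ∈ f, v ∈ A) ∧ (∃ v ∈ f, v ∉ A))).card : ℝ)) /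
        ((A.card : ℝ) * ((Fintype.card V : ℝ) - (A.card : ℝ)))} := by
  have hWcard : ∀ e ∈ W, #e = n := fun e he => by
    rw [hW] at he; exact (mem_powersetCard.1 (mem_filter.1 he).1).2
  have hWmem : ∀ f ∈ faces, ∀ e ⊆ f, #e = n → e ∈ W := fun f hf e hef he => by
    rw [hW]; exact mem_filter.2 ⟨mem_powersetCard.2 ⟨subset_univ _, he⟩, f, hf, hef⟩
  have hlam_le : |lam| ≤ (n * D : ℕ) :=
    SimpleGraph.abs_le_of_hasEigenvalue_adjMatrix _ (embedded_degree_le hpure hWcard hD) hlam.1.1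
  have hδV : Fintype.card V * δmin ≤ W.card * n :=
    (le_sum_card fun v => hδ.2 ⟨v, rfl⟩).trans (sum_congr rfl hWcard).le |>.trans (by simp)
  have hnk : (n : ℝ) ≤ k * (n + 1 - k) := by
    have hk1 : (1 : ℝ) ≤ k := by norm_cast; omega
    have hkn : (k : ℝ) ≤ n := by norm_cast; omega
    nlinarith
  obtain ⟨v₀⟩ := hconn.nonempty
  obtain ⟨f₀, hf₀, -⟩ := hcover v₀
  have hV : 1 < Fintype.card V := by have := card_le_univ f₀; rw [hpure f₀ hf₀] at this; omega
  refine le_csInf ⟨_, {v₀}, by simp, by simpa using hV, rfl⟩ ?_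
  rintro _ ⟨A, hA, hAV, rfl⟩
  obtain ⟨a, ha⟩ := card_pos.1 hA
  obtain ⟨b, -, hb⟩ := exists_mem_notMem_of_card_lt_card (s := A) (t := univ) (by rwa [card_univ])
  obtain ⟨e, he, hcross⟩ := exists_ridge_cofaces_subset_crossing hn.le hpure hWmem hconn ha hb
  push_cast at hlam_le
  rw [mul_assoc _ (k : ℝ)]
  exact spectral_bound_le_cut_ratio (by exact_mod_cast hA) (by exact_mod_cast hAV)
    (by exact_mod_cast card_pos.2 ⟨e, he⟩) (by norm_cast; omega) hnk (by positivity)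
    (by exact_mod_cast hδV) (by positivity) (by exact_mod_cast hD e he ▸ card_le_card hcross)
    (by linarith [neg_abs_le lam])
end
end

section
/- Let $X$ be a finite connected pure $n$-dimensional simplicial complex ($n \geq 2$) with vertex set $V$, and let $A \subseteq V$ with $0 < |A| < |V|$. Let $W$ be the set of $(n-1)$-faces and let the embedded graph on $W$ join two $(n-1)$-faces when they lie in a common $n$-face. Set $k = \lfloor (n+1)/2 \rfloor$ and $\delta_{min} = \min_{v} \#\{(n-1)\text{-faces containing } v\}$. Then there exists $B \subseteq W$ with $1 \leq |B|$, $|E(B, W \setminus B)| \leq k(n+1-k) \cdot |F(A, V \setminus A)|$, and $|V \setminus A| \leq \frac{n |W \setminus B|}{\delta_{min}}$. -/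
/-!
Connectivity of the 1-skeleton gives a top face `f₀` meeting both `A` and its complement. At most
one facet of `f₀` fails to straddle `A`, so at least `n` ridges straddle `A`. Take `B` to be the
ridges inside `A` together with one straddling ridge `e₀`.

A cut edge lies in a top face that straddles `A`, and the `n + 1` ridges of such a face split into
`s + t ≤ n + 1` on the two sides of the cut, so the face carries at most
`s t ≤ k (n + 1 - k)` cut edges. Counting incidences between `Aᶜ` and the ridges, a ridge outside
`B` contributes at most `n` and a straddling one at most `n - 1`; the at least `n` straddling
ridges pay for moving `e₀` into `B`.
-/

open scoped Classical

open Finset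

theorem Nat.mul_le_div_two_mul_of_add_le {s t m : ℕ} (h : s + t ≤ m) :
    s * t ≤ m / 2 * (m - m / 2) := by
  obtain ⟨q, rfl | rfl⟩ : ∃ q, m = 2 * q ∨ m = 2 * q + 1 := ⟨m / 2, by omega⟩
  · rw [show 2 * q / 2 = q by omega, show 2 * q - q = q by omega]
    nlinarith [sq_nonneg ((s : ℤ) - t)]
  · rw [show (2 * q + 1) / 2 = q by omega, show 2 * q + 1 - q = q + 1 by omega]
    nlinarith [sq_nonneg ((s : ℤ) - t)]

section

variable {V : Type*}

abbrev Straddles (A s : Finset V) : Prop := (∃ v ∈ s, v ∈ A) ∧ ∃ v ∈ s, v ∉ A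

theorem Straddles.not_subset {A s : Finset V} (h : Straddles A s) : ¬ s ⊆ A := fun hs =>
  h.2.elim fun _ ⟨hv, hvA⟩ => hvA (hs hv)

variable [DecidableEq V]

theorem straddles_erase {A f : Finset V} {x y z : V} (hx : x ∈ f) (hxA : x ∈ A) (hy : y ∈ f)
    (hyA : y ∉ A) (hzx : z ≠ x) (hzy : z ≠ y) : Straddles A (f.erase z) :=
  ⟨⟨x, mem_erase.2 ⟨hzx.symm, hx⟩, hxA⟩, ⟨y, mem_erase.2 ⟨hzy.symm, hy⟩, hyA⟩⟩

/-- Only `f.erase x` and `f.erase y` can fail to straddle, and not both, since any third vertex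
would have to lie both in `A` and outside it. -/
theorem card_filter_not_straddles_erase_le_one {A f : Finset V} {x y : V} (hx : x ∈ f)
    (hxA : x ∈ A) (hy : y ∈ f) (hyA : y ∉ A) (hf : 3 ≤ #f) :
    #{z ∈ f | ¬ Straddles A (f.erase z)} ≤ 1 := by
  have hxy : x ≠ y := by rintro rfl; exact hyA hxA
  have key : ∀ a ∈ f, ¬ Straddles A (f.erase a) → a = x ∨ a = y := fun a ha h => by
    by_contra! hne
    exact h (straddles_erase hx hxA hy hyA hne.1 hne.2)
  obtain ⟨w, hw⟩ : ((f.erase x).erase y).Nonempty := by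
    rw [← card_pos, card_erase_of_mem (mem_erase.2 ⟨hxy.symm, hy⟩), card_erase_of_mem hx]
    omega
  obtain ⟨hwy, hwx, hwf⟩ : w ≠ y ∧ w ≠ x ∧ w ∈ f := by simpa using hw
  have hx_or_hy : Straddles A (f.erase x) ∨ Straddles A (f.erase y) := by
    by_contra! h
    have hwA : w ∉ A := fun hwA =>
      h.1 ⟨⟨w, mem_erase.2 ⟨hwx, hwf⟩, hwA⟩, ⟨y, mem_erase.2 ⟨hxy.symm, hy⟩, hyA⟩⟩
    exact h.2 ⟨⟨x, mem_erase.2 ⟨hxy, hx⟩, hxA⟩, ⟨w, mem_erase.2 ⟨hwy, hwf⟩, hwA⟩⟩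
  rw [card_le_one]
  intro a ha b hb
  simp only [mem_filter] at ha hb
  rcases key a ha.1 ha.2 with rfl | rfl <;> rcases key b hb.1 hb.2 with rfl | rfl
  exacts [rfl, (hx_or_hy.elim ha.2 hb.2).elim, (hx_or_hy.elim hb.2 ha.2).elim, rfl]

theorem card_sub_one_le_card_filter_straddles_erase {A f : Finset V} {x y : V} (hx : x ∈ f)
    (hxA : x ∈ A) (hy : y ∈ f) (hyA : y ∉ A) (hf : 3 ≤ #f) :
    #f - 1 ≤ #{z ∈ f | Straddles A (f.erase z)} := by
  have := card_filter_add_card_filter_not (s := f) (fun z => Straddles A (f.erase z))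
  have := card_filter_not_straddles_erase_le_one hx hxA hy hyA hf
  omega

theorem card_sdiff_add_ite_straddles_le {n : ℕ} (A e : Finset V) (he : #e = n) :
    #(e \ A) + (if Straddles A e then 1 else 0) ≤ if e ⊆ A then 0 else n := by
  split_ifs with hs hA hA
  · exact absurd hA hs.not_subset
  · obtain ⟨v, hv, hvA⟩ := hs.1
    have hlt : #(e \ A) < #e :=
      card_lt_card ⟨sdiff_subset, fun h => (mem_sdiff.1 (h hv)).2 hvA⟩
    omega
  · simp [sdiff_eq_empty_iff_subset.2 hA]
  · simpa [← he] using card_le_card sdiff_subset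

theorem sum_card_sdiff_add_card_filter_straddles_le {n : ℕ} (A : Finset V)
    {W : Finset (Finset V)} (hW : ∀ e ∈ W, #e = n) :
    ∑ e ∈ W, #(e \ A) + #{e ∈ W | Straddles A e} ≤ n * #{e ∈ W | ¬ e ⊆ A} := by
  calc ∑ e ∈ W, #(e \ A) + #{e ∈ W | Straddles A e}
      = ∑ e ∈ W, (#(e \ A) + if Straddles A e then 1 else 0) := by
        rw [sum_add_distrib, sum_boole, Nat.cast_id]
    _ ≤ ∑ e ∈ W, if e ⊆ A then 0 else n :=
        sum_le_sum fun e he => card_sdiff_add_ite_straddles_le A e (hW e he)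
    _ = n * #{e ∈ W | ¬ e ⊆ A} := by
        rw [sum_ite, sum_const_zero, zero_add, sum_const, smul_eq_mul, mul_comm]

theorem le_card_filter_straddles {A f : Finset V} {W : Finset (Finset V)} {x y : V} (hx : x ∈ f)
    (hxA : x ∈ A) (hy : y ∈ f) (hyA : y ∉ A) (hf : 3 ≤ #f) (hW : ∀ z ∈ f, f.erase z ∈ W) :
    #f - 1 ≤ #{e ∈ W | Straddles A e} :=
  calc #f - 1 ≤ #{z ∈ f | Straddles A (f.erase z)} :=
        card_sub_one_le_card_filter_straddles_erase hx hxA hy hyA hf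
    _ = #({z ∈ f | Straddles A (f.erase z)}.image f.erase) :=
        (card_image_of_injOn ((erase_injOn f).mono (filter_subset _ f))).symm
    _ ≤ #{e ∈ W | Straddles A e} := card_le_card fun e he => by
        obtain ⟨z, hz, rfl⟩ := mem_image.1 he
        obtain ⟨hzf, hs⟩ := mem_filter.1 hz
        exact mem_filter.2 ⟨hW z hzf, hs⟩

theorem card_filter_subset_le {n : ℕ} {W : Finset (Finset V)} (hW : ∀ e ∈ W, #e = n)
    {f : Finset V} (hf : #f = n + 1) : #{e ∈ W | e ⊆ f} ≤ n + 1 :=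
  calc #{e ∈ W | e ⊆ f} ≤ #(f.powersetCard n) := card_le_card fun e he => by
        obtain ⟨heW, hef⟩ := mem_filter.1 he
        exact mem_powersetCard.2 ⟨hef, hW e heW⟩
    _ = n + 1 := by rw [card_powersetCard, hf, Nat.choose_succ_self_right]

theorem card_le_of_forall_exists_common_superset {m : ℕ} {W B F : Finset (Finset V)} (hB : B ⊆ W)
    {P : Finset (Finset V × Finset V)}
    (hP : ∀ p ∈ P, p.1 ∈ B ∧ p.2 ∈ W \ B ∧ ∃ f ∈ F, p.1 ⊆ f ∧ p.2 ⊆ f)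
    (hF : ∀ f ∈ F, #{e ∈ W | e ⊆ f} ≤ m) :
    #P ≤ m / 2 * (m - m / 2) * #F := by
  have hsub : P ⊆ F.biUnion fun f => {e ∈ B | e ⊆ f} ×ˢ {e ∈ W \ B | e ⊆ f} := fun p hp => by
    obtain ⟨h1, h2, f, hf, hf1, hf2⟩ := hP p hp
    exact mem_biUnion.2 ⟨f, hf, mem_product.2 ⟨mem_filter.2 ⟨h1, hf1⟩, mem_filter.2 ⟨h2, hf2⟩⟩⟩
  calc #P ≤ ∑ f ∈ F, #({e ∈ B | e ⊆ f} ×ˢ {e ∈ W \ B | e ⊆ f}) :=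
        (card_le_card hsub).trans card_biUnion_le
    _ ≤ ∑ _f ∈ F, m / 2 * (m - m / 2) := sum_le_sum fun f hf => by
        rw [card_product]
        apply Nat.mul_le_div_two_mul_of_add_le
        rw [← card_union_of_disjoint (disjoint_filter_filter disjoint_sdiff), ← filter_union,
          union_sdiff_of_subset hB]
        exact hF f hf
    _ = m / 2 * (m - m / 2) * #F := by rw [sum_const, smul_eq_mul, mul_comm]

def cutSide (A e₀ : Finset V) (W : Finset (Finset V)) : Finset (Finset V) :=
  insert e₀ {e ∈ W | e ⊆ A}

theorem cutSide_subset {A e₀ : Finset V} {W : Finset (Finset V)} (he₀ : e₀ ∈ W) :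
    cutSide A e₀ W ⊆ W :=
  insert_subset he₀ (filter_subset _ W)

theorem straddles_of_superset_of_cut_pair {A e₀ b c f : Finset V} {W : Finset (Finset V)}
    (he₀ : Straddles A e₀) (hW : ∀ e ∈ W, e.Nonempty) (hb : b ∈ cutSide A e₀ W)
    (hc : c ∈ W \ cutSide A e₀ W) (hbf : b ⊆ f) (hcf : c ⊆ f) : Straddles A f := by
  have hbA : ∃ v ∈ b, v ∈ A := by
    rcases mem_insert.1 hb with rfl | hb
    · exact he₀.1
    · obtain ⟨hbW, hbA⟩ := mem_filter.1 hb
      obtain ⟨v, hv⟩ := hW b hbW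
      exact ⟨v, hv, hbA hv⟩
  have hcA : ∃ v ∈ c, v ∉ A := by
    obtain ⟨hcW, hc⟩ := mem_sdiff.1 hc
    by_contra! h
    exact hc (mem_insert_of_mem (mem_filter.2 ⟨hcW, h⟩))
  exact ⟨hbA.imp fun _ ⟨hv, hA⟩ => ⟨hbf hv, hA⟩, hcA.imp fun _ ⟨hv, hA⟩ => ⟨hcf hv, hA⟩⟩

theorem card_cut_le {n : ℕ} {A e₀ : Finset V} {W faces : Finset (Finset V)} (hn : 0 < n)
    (hpure : ∀ f ∈ faces, #f = n + 1) (hW : ∀ e ∈ W, #e = n) (he₀W : e₀ ∈ W)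
    (he₀ : Straddles A e₀) :
    #{p ∈ cutSide A e₀ W ×ˢ (W \ cutSide A e₀ W) | p.1 ≠ p.2 ∧ ∃ f ∈ faces, p.1 ⊆ f ∧ p.2 ⊆ f} ≤
      (n + 1) / 2 * (n + 1 - (n + 1) / 2) * #{f ∈ faces | Straddles A f} := by
  have hWne : ∀ e ∈ W, e.Nonempty := fun e he => card_pos.1 (by rw [hW e he]; omega)
  refine card_le_of_forall_exists_common_superset (cutSide_subset (A := A) he₀W) (fun p hp => ?_)
    fun f hf => card_filter_subset_le hW (hpure f (mem_filter.1 hf).1)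
  obtain ⟨hp, -, f, hf, hpf₁, hpf₂⟩ := mem_filter.1 hp
  obtain ⟨hb, hc⟩ := mem_product.1 hp
  exact ⟨hb, hc, f, mem_filter.2 ⟨hf, straddles_of_superset_of_cut_pair he₀ hWne hb hc hpf₁ hpf₂⟩,
    hpf₁, hpf₂⟩

theorem card_filter_mem_pos {W : Finset (Finset V)} {f : Finset V} {v : V} (hv : v ∈ f)
    (hf : 2 ≤ #f) (hW : ∀ z ∈ f, f.erase z ∈ W) : 0 < #{e ∈ W | v ∈ e} := by
  obtain ⟨z, hz, hzv⟩ := exists_mem_ne hf v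
  exact card_pos.2 ⟨f.erase z, mem_filter.2 ⟨hW z hz, mem_erase.2 ⟨hzv.symm, hv⟩⟩⟩

theorem card_compl_mul_le [Fintype V] {n δ : ℕ} {A e₀ : Finset V} {W : Finset (Finset V)}
    (hW : ∀ e ∈ W, #e = n) (hδ : ∀ v, δ ≤ #{e ∈ W | v ∈ e})
    (hstr : n ≤ #{e ∈ W | Straddles A e}) (he₀ : e₀ ∈ W) (he₀A : ¬ e₀ ⊆ A) :
    #Aᶜ * δ ≤ n * #(W \ cutSide A e₀ W) := by
  have hcomp : #(W \ cutSide A e₀ W) = #{e ∈ W | ¬ e ⊆ A} - 1 := by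
    rw [cutSide, sdiff_insert, ← filter_not, card_erase_of_mem (mem_filter.2 ⟨he₀, he₀A⟩)]
  have hpos : 0 < #{e ∈ W | ¬ e ⊆ A} := card_pos.2 ⟨e₀, mem_filter.2 ⟨he₀, he₀A⟩⟩
  have hinc : #Aᶜ * δ ≤ ∑ e ∈ W, #(e \ A) := by
    calc #Aᶜ * δ ≤ ∑ e ∈ W, #(Aᶜ ∩ e) := le_sum_card_inter fun v _ => hδ v
      _ = ∑ e ∈ W, #(e \ A) := by simp_rw [inter_comm Aᶜ, ← sdiff_eq_inter_compl]
  have := sum_card_sdiff_add_card_filter_straddles_le A hW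
  rw [hcomp, Nat.mul_sub_one]
  omega

end

theorem SimpleGraph.Preconnected.exists_adj_mem_notMem {V : Type*} {G : SimpleGraph V}
    (hG : G.Preconnected) {S : Set V} {u v : V} (hu : u ∈ S) (hv : v ∉ S) :
    ∃ x ∈ S, ∃ y ∉ S, G.Adj x y := by
  obtain ⟨p⟩ := hG u v
  obtain ⟨d, -, hd₁, hd₂⟩ := p.exists_boundary_dart S hu hv
  exact ⟨d.fst, hd₁, d.snd, hd₂, d.adj⟩

theorem stmt11 {V : Type*} [Fintype V] [DecidableEq V]
    (n : ℕ) (hn : 2 ≤ n)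
    (faces : Finset (Finset V))
    (hpure : ∀ f ∈ faces, f.card = n + 1)
    (hcover : ∀ v : V, ∃ f ∈ faces, v ∈ f)
    (hconn : (skeleton faces).Connected)
    (W : Finset (Finset V))
    (hW : W = ((Finset.univ : Finset V).powersetCard n).filter
      (fun e => ∃ f ∈ faces, e ⊆ f))
    (k : ℕ) (hk : k = (n + 1) / 2)
    (δmin : ℕ)
    (hδ : IsLeast {m : ℕ | ∃ v : V, m = (W.filter (fun e => v ∈ e)).card} δmin)
    (A : Finset V) (hA1 : 0 < A.card) (hA2 : A.card < Fintype.card V) :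
    ∃ B ⊆ W, 1 ≤ B.card ∧
      ((B ×ˢ (W \ B)).filter
          (fun p => p.1 ≠ p.2 ∧ ∃ f ∈ faces, p.1 ⊆ f ∧ p.2 ⊆ f)).card ≤
        k * (n + 1 - k) *
          (faces.filter (fun f => (∃ v ∈ f, v ∈ A) ∧ (∃ v ∈ f, v ∉ A))).card ∧
      ((Aᶜ.card : ℝ)) ≤ (n : ℝ) * ((W \ B).card : ℝ) / (δmin : ℝ) := by
  have hWcard : ∀ e ∈ W, #e = n := fun e he => by
    subst hW; exact mem_powersetCard_univ.1 (mem_filter.1 he).1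
  have hfacet : ∀ f ∈ faces, ∀ z ∈ f, f.erase z ∈ W := fun f hf z hz => by
    subst hW
    refine mem_filter.2 ⟨mem_powersetCard_univ.2 ?_, f, hf, erase_subset z f⟩
    rw [card_erase_of_mem hz, hpure f hf, Nat.add_sub_cancel]
  obtain ⟨u, hu⟩ := card_pos.1 hA1
  obtain ⟨w, hw⟩ : ∃ w, w ∉ A := by
    by_contra! h
    exact hA2.ne (by rw [eq_univ_of_forall h, card_univ])
  obtain ⟨x, hxA, y, hyA, -, f₀, hf₀, hx, hy⟩ :=
    hconn.preconnected.exists_adj_mem_notMem (S := ↑A) hu hw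
  have hstr : n ≤ #{e ∈ W | Straddles A e} := by
    simpa [hpure f₀ hf₀] using
      le_card_filter_straddles hx hxA hy hyA (by rw [hpure f₀ hf₀]; omega) (hfacet f₀ hf₀)
  obtain ⟨e₀, he₀⟩ := card_pos.1 (lt_of_lt_of_le (by omega) hstr)
  obtain ⟨he₀W, he₀A⟩ := mem_filter.1 he₀
  have hδpos : 0 < δmin := by
    obtain ⟨v, rfl⟩ := hδ.1
    obtain ⟨f, hf, hvf⟩ := hcover v
    exact card_filter_mem_pos hvf (by rw [hpure f hf]; omega) (hfacet f hf)
  refine ⟨cutSide A e₀ W, cutSide_subset he₀W, card_pos.2 (insert_nonempty _ _), ?_, ?_⟩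
  · subst hk
    exact card_cut_le (by omega) hpure hWcard he₀W he₀A
  · rw [le_div_iff₀ (by exact_mod_cast hδpos)]
    exact_mod_cast card_compl_mul_le hWcard (fun v => hδ.2 ⟨v, rfl⟩) hstr he₀W he₀A.not_subset
end

section
/- Let $X$ be a finite connected pure 2-dimensional simplicial complex with vertex set $V$, and let $A$ be a nonempty proper subset of $V$ attaining $H(X) = \min \frac{|V|\cdot|F(A,V\setminus A)|}{|A|\cdot|V\setminus A|}$. Let $W$ be the edge set of $X$ and $\delta_{min}$ the minimum number of edges containing a vertex. Then there exists $B \subseteq W$ with $0 < |B| < |W|$ such that $\frac{|E(B, W\setminus B)|}{2} \leq |F(A, V\setminus A)|$, $|A| \leq |B|$, and $|V \setminus A| \leq \frac{2|W \setminus B|}{\delta_{min}}$. -/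
open scoped Classical

/-!
Take `B` to be the edges of `X` inside `A` together with one edge `e₀` crossing the cut, which
exists since the 1-skeleton is connected. The face through `e₀` contains a second crossing edge
`e₁`, and `e₁ ∉ B`.

* Two distinct edges sharing a face `f` span `f`; if one lies in `B` and the other does not, `f`
  meets both `A` and its complement. A triangle whose three edges split as `k + m` between `B`
  and the rest carries `k m ≤ 2` such ordered pairs.
* Minimality of the ratio forces the subgraph induced on `A` to be connected: splitting `A`
  along a separation adds up the crossing faces while `a (n - a)` is strictly subadditive.
  A connected graph on `|A|` vertices has at least `|A| - 1` edges.
* Double counting vertex–edge incidences, `δ_min |V ∖ A| ≤ ∑_{e ∈ W} |e ∖ A|`. Edges of `B`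
  contribute `1` in total and edges outside `B` at most `2` each, with `e₁` contributing `1`.
-/

open Finset

section Pairs

variable {α : Type*} [DecidableEq α]

lemma Finset.union_eq_of_card_eq_two_of_card_eq_three {s t f : Finset α} (hs : #s = 2)
    (ht : #t = 2) (hf : #f = 3) (hst : s ≠ t) (hsf : s ⊆ f) (htf : t ⊆ f) : s ∪ t = f := by
  refine eq_of_subset_of_card_le (union_subset hsf htf) ?_
  have hts : ¬t ⊆ s := fun h => hst (eq_of_subset_of_card_le h (by omega)).symm
  have := card_lt_card <|
    ssubset_iff_subset_ne.2 ⟨subset_union_left, fun h => hts (union_eq_left.1 h.symm)⟩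
  omega

lemma Finset.pair_sdiff_of_mem_of_notMem {x y : α} {A : Finset α} (hx : x ∈ A) (hy : y ∉ A) :
    ({x, y} : Finset α) \ A = {y} := by
  ext z
  simp only [mem_sdiff, mem_insert, mem_singleton]
  grind

lemma Finset.card_mul_card_le_two_of_union_subset_powersetCard {P Q : Finset (Finset α)}
    {g : Finset α} (hg : #g = 3) (hPQ : Disjoint P Q) (hsub : P ∪ Q ⊆ g.powersetCard 2) :
    #P * #Q ≤ 2 := by
  have h : #P + #Q ≤ 3 := by
    simpa [← card_union_of_disjoint hPQ, card_powersetCard, hg] using card_le_card hsub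
  have hP : #P ≤ 3 := by omega
  interval_cases #P <;> omega

lemma Finset.exists_pair_ne_of_card_eq_three {f A : Finset α} (hf : #f = 3) {x y : α}
    (hx : x ∈ f) (hy : y ∈ f) (hxA : x ∈ A) (hyA : y ∉ A) :
    ∃ u ∈ f, ∃ v ∈ f, u ∈ A ∧ v ∉ A ∧ ({u, v} : Finset α) ≠ {x, y} := by
  obtain ⟨z, hz, hzxy⟩ := exists_mem_notMem_of_card_lt_card (s := {x, y}) (t := f)
    (by have := card_le_two (a := x) (b := y); omega)
  by_cases hzA : z ∈ A
  · exact ⟨z, hz, y, hy, hzA, hyA, fun h => by grind [congrArg (x ∈ ·) h]⟩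
  · exact ⟨x, hx, z, hz, hxA, hzA, fun h => by grind [congrArg (y ∈ ·) h]⟩

end Pairs

namespace SimpleGraph

variable {V : Type*} {G : SimpleGraph V}

lemma Preconnected.exists_adj_of_mem_of_notMem (hG : G.Preconnected) {s : Set V} {u v : V}
    (hu : u ∈ s) (hv : v ∉ s) : ∃ x ∈ s, ∃ y ∉ s, G.Adj x y := by
  obtain ⟨p⟩ := hG u v
  obtain ⟨d, -, hd⟩ := p.exists_boundary_dart s hu hv
  exact ⟨d.fst, hd.1, d.snd, hd.2, d.adj⟩

lemma induce_connected_of_forall_exists_adj [DecidableEq V] {s : Finset V} (hs : s.Nonempty)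
    (h : ∀ t ⊆ s, t.Nonempty → (s \ t).Nonempty → ∃ x ∈ t, ∃ y ∈ s \ t, G.Adj x y) :
    (G.induce (s : Set V)).Connected := by
  obtain ⟨u, hu⟩ := hs
  rw [connected_iff_exists_forall_reachable]
  refine ⟨⟨u, hu⟩, ?_⟩
  by_contra! ⟨⟨v, hv⟩, hnr⟩
  let t := s.filter fun w => ∃ hw : w ∈ s, (G.induce (s : Set V)).Reachable ⟨u, hu⟩ ⟨w, hw⟩
  obtain ⟨x, hx, y, hy, hxy⟩ :=
    h t (filter_subset _ _) ⟨u, by simp [t, hu]⟩ ⟨v, by simp [t, mem_coe.1 hv, hnr]⟩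
  obtain ⟨hxs, hxs', hux⟩ := mem_filter.1 hx
  obtain ⟨hys, hyt⟩ := mem_sdiff.1 hy
  exact hyt (mem_filter.2 ⟨hys, hys, hux.trans
    (show (G.induce (s : Set V)).Adj ⟨x, hxs'⟩ ⟨y, hys⟩ from hxy).reachable⟩)

end SimpleGraph

lemma min_cut_ratio_lt_add {n a₁ a₂ c₁ c₂ : ℝ} (ha₁ : 0 < a₁) (ha₂ : 0 < a₂) (hn : a₁ + a₂ < n)
    (hc : 0 < c₁ + c₂) :
    min (n * c₁ / (a₁ * (n - a₁))) (n * c₂ / (a₂ * (n - a₂))) <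
      n * (c₁ + c₂) / ((a₁ + a₂) * (n - (a₁ + a₂))) := by
  by_contra! h
  rw [le_min_iff] at h
  have hd : 0 < (a₁ + a₂) * (n - (a₁ + a₂)) := mul_pos (by linarith) (by linarith)
  rw [div_le_div_iff₀ hd (mul_pos ha₁ (by linarith)),
    div_le_div_iff₀ hd (mul_pos ha₂ (by linarith))] at h
  -- sum the two inequalities: `a₁ (n - a₁) + a₂ (n - a₂) = (a₁ + a₂) (n - (a₁ + a₂)) + 2 a₁ a₂`
  nlinarith [mul_pos (mul_pos (by linarith : (0 : ℝ) < n) hc) (mul_pos ha₁ ha₂)]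

section Complex

variable {V : Type*} [DecidableEq V] {faces : Finset (Finset V)} {A : Finset V}

def crossingFaces (faces : Finset (Finset V)) (A : Finset V) : Finset (Finset V) :=
  faces.filter fun f => (∃ v ∈ f, v ∈ A) ∧ ∃ v ∈ f, v ∉ A

def edgeBoundary (faces W B : Finset (Finset V)) : Finset (Finset V × Finset V) :=
  (B ×ˢ (W \ B)).filter fun p => p.1 ≠ p.2 ∧ ∃ f ∈ faces, p.1 ⊆ f ∧ p.2 ⊆ f

lemma crossingFaces_nonempty_of_adj {x y : V} (hxy : (skeleton faces).Adj x y) (hxA : x ∈ A)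
    (hyA : y ∉ A) : (crossingFaces faces A).Nonempty :=
  let ⟨_, f, hf, hxf, hyf⟩ := hxy
  ⟨f, mem_filter.2 ⟨hf, ⟨x, hxf, hxA⟩, y, hyf, hyA⟩⟩

lemma exists_adj_ne_of_adj (hpure : ∀ f ∈ faces, #f = 3) {x y : V}
    (hxy : (skeleton faces).Adj x y) (hxA : x ∈ A) (hyA : y ∉ A) :
    ∃ u ∈ A, ∃ v ∉ A, (skeleton faces).Adj u v ∧ ({u, v} : Finset V) ≠ {x, y} := by
  obtain ⟨-, f, hf, hxf, hyf⟩ := hxy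
  obtain ⟨u, huf, v, hvf, huA, hvA, huv⟩ :=
    exists_pair_ne_of_card_eq_three (hpure f hf) hxf hyf hxA hyA
  exact ⟨u, huA, v, hvA, ⟨fun h => hvA (h ▸ huA), f, hf, huf, hvf⟩, huv⟩

lemma card_crossingFaces_union {A₁ A₂ : Finset V}
    (hsep : ∀ f ∈ faces, (∃ x ∈ f, x ∈ A₁) → ∀ y ∈ f, y ∉ A₂) :
    #(crossingFaces faces (A₁ ∪ A₂)) = #(crossingFaces faces A₁) + #(crossingFaces faces A₂) := by
  rw [← card_union_of_disjoint]
  · congr 1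
    ext f
    simp only [crossingFaces, mem_union, mem_filter]
    grind
  · rw [disjoint_left]
    simp only [crossingFaces, mem_filter]
    grind

lemma card_filter_edgeBoundary_union_eq_le_two {W B : Finset (Finset V)} {g : Finset V}
    (hW : ∀ e ∈ W, #e = 2) (hBW : B ⊆ W) (hg : #g = 3) :
    #{p ∈ edgeBoundary faces W B | p.1 ∪ p.2 = g} ≤ 2 := by
  set P := B.filter (· ⊆ g)
  set Q := (W \ B).filter (· ⊆ g)
  calc #{p ∈ edgeBoundary faces W B | p.1 ∪ p.2 = g}
      ≤ #(P ×ˢ Q) := by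
        refine card_le_card fun p hp => ?_
        simp only [edgeBoundary, mem_filter, mem_product] at hp
        simp only [P, Q, mem_product, mem_filter]
        exact ⟨⟨hp.1.1.1, hp.2 ▸ subset_union_left⟩, hp.1.1.2, hp.2 ▸ subset_union_right⟩
    _ = #P * #Q := card_product P Q
    _ ≤ 2 := by
        refine card_mul_card_le_two_of_union_subset_powersetCard hg
          (disjoint_filter_filter disjoint_sdiff) fun e he => ?_
        rw [mem_powersetCard]
        rcases mem_union.1 he with he | he
        · exact ⟨(mem_filter.1 he).2, hW e (hBW (mem_filter.1 he).1)⟩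
        · exact ⟨(mem_filter.1 he).2, hW e (mem_sdiff.1 (mem_filter.1 he).1).1⟩

lemma mul_card_compl_le [Fintype V] {W B : Finset (Finset V)} {δ : ℕ} (hW : ∀ e ∈ W, #e = 2)
    (hδ : ∀ v, δ ≤ #(W.filter (v ∈ ·))) (hBW : B ⊆ W) (hB : ∑ e ∈ B, #(e \ A) ≤ 1)
    {e₁ : Finset V} (he₁ : e₁ ∈ W \ B) (he₁A : #(e₁ \ A) < 2) : δ * #Aᶜ ≤ 2 * #(W \ B) := by
  have hlt : ∑ e ∈ W \ B, #(e \ A) < ∑ _ ∈ W \ B, 2 :=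
    sum_lt_sum (fun e he => (card_le_card sdiff_subset).trans (hW e (mem_sdiff.1 he).1).le)
      ⟨e₁, he₁, he₁A⟩
  calc δ * #Aᶜ ≤ ∑ v ∈ Aᶜ, #(W.filter (v ∈ ·)) := by
        simpa [mul_comm] using card_nsmul_le_sum Aᶜ _ δ fun v _ => hδ v
    _ = ∑ e ∈ W, #(Aᶜ.filter (· ∈ e)) := sum_card_bipartiteAbove_eq_sum_card_bipartiteBelow _
    _ = ∑ e ∈ W, #(e \ A) := by simp_rw [filter_mem_eq_inter, inter_comm, sdiff_eq_inter_compl]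
    _ = ∑ e ∈ W \ B, #(e \ A) + ∑ e ∈ B, #(e \ A) := (sum_sdiff hBW).symm
    _ ≤ 2 * #(W \ B) := by
        rw [sum_const, smul_eq_mul] at hlt
        omega

variable [Fintype V]

def skeletonEdges (faces : Finset (Finset V)) : Finset (Finset V) :=
  ((univ : Finset V).powersetCard 2).filter fun e => ∃ f ∈ faces, e ⊆ f

def insideEdges (faces : Finset (Finset V)) (A : Finset V) : Finset (Finset V) :=
  (skeletonEdges faces).filter (· ⊆ A)

noncomputable def cheegerRatio (faces : Finset (Finset V)) (A : Finset V) : ℝ :=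
  (Fintype.card V : ℝ) * #(crossingFaces faces A) / (#A * (Fintype.card V - #A))

lemma mem_skeletonEdges {e : Finset V} :
    e ∈ skeletonEdges faces ↔ #e = 2 ∧ ∃ f ∈ faces, e ⊆ f := by
  simp [skeletonEdges, mem_powersetCard]

lemma pair_mem_skeletonEdges {u v : V} (h : (skeleton faces).Adj u v) :
    {u, v} ∈ skeletonEdges faces := by
  obtain ⟨huv, f, hf, hu, hv⟩ := h
  exact mem_skeletonEdges.2 ⟨card_pair huv, f, hf, insert_subset hu (singleton_subset_iff.2 hv)⟩

lemma card_filter_mem_skeletonEdges_pos [Nontrivial V] (hconn : (skeleton faces).Connected)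
    (v : V) : 0 < #((skeletonEdges faces).filter (v ∈ ·)) := by
  obtain ⟨u, hvu⟩ := (SimpleGraph.degree_pos_iff_exists_adj _ _).1
    (hconn.preconnected.degree_pos_of_nontrivial v)
  exact card_pos.2 ⟨_, mem_filter.2 ⟨pair_mem_skeletonEdges hvu, mem_insert_self v _⟩⟩

lemma exists_face_meets_of_forall_cheegerRatio_le (hF : (crossingFaces faces A).Nonempty)
    (hA : #A < Fintype.card V)
    (hmin : ∀ A', 0 < #A' → #A' < Fintype.card V → cheegerRatio faces A ≤ cheegerRatio faces A')
    {t : Finset V} (ht : t ⊆ A) (ht₀ : t.Nonempty) (ht₁ : (A \ t).Nonempty) :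
    ∃ f ∈ faces, (∃ x ∈ f, x ∈ t) ∧ ∃ y ∈ f, y ∈ A \ t := by
  by_contra! hsep
  have hc := card_crossingFaces_union hsep
  rw [union_sdiff_of_subset ht] at hc
  have ha : #A = #t + #(A \ t) := by have := card_sdiff_add_card_eq_card ht; omega
  have hlt (s : Finset V) (hs : s ⊆ A) : #s < Fintype.card V := (card_le_card hs).trans_lt hA
  have hpos (s : Finset V) (hs : s.Nonempty) : (0 : ℝ) < #s := Nat.cast_pos.2 (card_pos.2 hs)
  have key := min_cut_ratio_lt_add (n := Fintype.card V) (hpos t ht₀) (hpos _ ht₁)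
    (by rw [← Nat.cast_add, ← ha]; exact_mod_cast hA)
    (by rw [← Nat.cast_add, ← hc]; exact Nat.cast_pos.2 (card_pos.2 hF))
  refine key.not_ge (le_min ?_ ?_)
  · simpa [cheegerRatio, hc, ha] using hmin t (card_pos.2 ht₀) (hlt t ht)
  · simpa [cheegerRatio, hc, ha] using hmin (A \ t) (card_pos.2 ht₁) (hlt _ sdiff_subset)

lemma induce_connected_of_forall_cheegerRatio_le (hF : (crossingFaces faces A).Nonempty)
    (hA₀ : A.Nonempty) (hA : #A < Fintype.card V)
    (hmin : ∀ A', 0 < #A' → #A' < Fintype.card V → cheegerRatio faces A ≤ cheegerRatio faces A') :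
    ((skeleton faces).induce (A : Set V)).Connected := by
  refine SimpleGraph.induce_connected_of_forall_exists_adj hA₀ fun t ht ht₀ ht₁ => ?_
  obtain ⟨f, hf, ⟨x, hxf, hxt⟩, y, hyf, hy⟩ :=
    exists_face_meets_of_forall_cheegerRatio_le hF hA hmin ht ht₀ ht₁
  exact ⟨x, hxt, y, hy, fun h => (mem_sdiff.1 hy).2 (h ▸ hxt), f, hf, hxf, hyf⟩

lemma card_le_card_insideEdges_add_one
    (hA : ((skeleton faces).induce (A : Set V)).Connected) :
    #A ≤ #(insideEdges faces A) + 1 := by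
  have h := hA.card_vert_le_card_edgeSet_add_one
  rw [Nat.card_coe_set_eq, Set.ncard_coe_finset, Nat.card_coe_set_eq] at h
  refine h.trans (Nat.add_le_add_right ?_ 1)
  rw [← Set.ncard_coe_finset]
  refine Set.ncard_le_ncard_of_injOn (fun z => (z.map Subtype.val).toFinset) ?_ ?_ (finite_toSet _)
  · rintro ⟨⟨u, hu⟩, ⟨v, hv⟩⟩ huv
    simp only [Sym2.map_mk, Sym2.toFinset_mk_eq, insideEdges, coe_filter, Set.mem_ofPred_eq]
    exact ⟨pair_mem_skeletonEdges huv, insert_subset hu (singleton_subset_iff.2 hv)⟩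
  · intro z _ w _ hzw
    refine Sym2.map.injective Subtype.val_injective (Sym2.ext fun v => ?_)
    simpa only [Sym2.mem_toFinset] using Finset.ext_iff.1 hzw v

lemma union_mem_crossingFaces (hpure : ∀ f ∈ faces, #f = 3) {B : Finset (Finset V)}
    (hBA : ∀ e ∈ B, ∃ v ∈ e, v ∈ A) (hAB : ∀ e ∈ skeletonEdges faces, e ⊆ A → e ∈ B)
    (hBW : B ⊆ skeletonEdges faces) {p : Finset V × Finset V}
    (hp : p ∈ edgeBoundary faces (skeletonEdges faces) B) : p.1 ∪ p.2 ∈ crossingFaces faces A := by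
  obtain ⟨hp, hne, f, hf, h₁, h₂⟩ := mem_filter.1 hp
  obtain ⟨hb, hcW, hcB⟩ := by simpa only [mem_product, mem_sdiff] using hp
  have hunion : p.1 ∪ p.2 = f := union_eq_of_card_eq_two_of_card_eq_three
    (mem_skeletonEdges.1 (hBW hb)).1 (mem_skeletonEdges.1 hcW).1 (hpure f hf) hne h₁ h₂
  obtain ⟨x, hx, hxA⟩ := hBA _ hb
  obtain ⟨y, hy, hyA⟩ := not_subset.1 fun h => hcB (hAB _ hcW h)
  rw [hunion]
  exact mem_filter.2 ⟨hf, ⟨x, h₁ hx, hxA⟩, y, h₂ hy, hyA⟩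

lemma card_edgeBoundary_le (hpure : ∀ f ∈ faces, #f = 3) {B : Finset (Finset V)}
    (hBA : ∀ e ∈ B, ∃ v ∈ e, v ∈ A) (hAB : ∀ e ∈ skeletonEdges faces, e ⊆ A → e ∈ B)
    (hBW : B ⊆ skeletonEdges faces) :
    #(edgeBoundary faces (skeletonEdges faces) B) ≤ 2 * #(crossingFaces faces A) :=
  card_le_mul_card_image_of_maps_to (fun _ hp => union_mem_crossingFaces hpure hBA hAB hBW hp) 2
    fun g hg => card_filter_edgeBoundary_union_eq_le_two (fun _ he => (mem_skeletonEdges.1 he).1)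
      hBW (hpure g (mem_filter.1 hg).1)

lemma pair_notMem_insideEdges {x y : V} (hyA : y ∉ A) : {x, y} ∉ insideEdges faces A :=
  fun h => hyA ((mem_filter.1 h).2 (mem_insert_of_mem (mem_singleton_self y)))

lemma pair_mem_sdiff_insert_insideEdges {x y u v : V} (huv : (skeleton faces).Adj u v)
    (hvA : v ∉ A) (hne : ({u, v} : Finset V) ≠ {x, y}) :
    {u, v} ∈ skeletonEdges faces \ insert {x, y} (insideEdges faces A) :=
  mem_sdiff.2 ⟨pair_mem_skeletonEdges huv, fun h =>
    (mem_insert.1 h).elim hne (pair_notMem_insideEdges hvA)⟩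

lemma exists_mem_of_mem_insert_insideEdges {x y : V} (hxA : x ∈ A) :
    ∀ e ∈ insert {x, y} (insideEdges faces A), ∃ v ∈ e, v ∈ A := by
  refine (forall_mem_insert _ _ _).2 ⟨⟨x, mem_insert_self x _, hxA⟩, fun e he => ?_⟩
  obtain ⟨he, heA⟩ := mem_filter.1 he
  obtain ⟨v, hv⟩ := card_pos.1 ((mem_skeletonEdges.1 he).1 ▸ two_pos)
  exact ⟨v, hv, heA hv⟩

lemma sum_card_sdiff_insert_insideEdges {x y : V} (hxA : x ∈ A) (hyA : y ∉ A) :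
    ∑ e ∈ insert {x, y} (insideEdges faces A), #(e \ A) = 1 := by
  rw [sum_insert (pair_notMem_insideEdges hyA), pair_sdiff_of_mem_of_notMem hxA hyA,
    sum_eq_zero fun e he => by rw [sdiff_eq_empty_iff_subset.2 (mem_filter.1 he).2, card_empty]]
  rfl

end Complex

theorem stmt12_general {V : Type*} [Fintype V] [DecidableEq V]
    (faces : Finset (Finset V))
    (hpure : ∀ f ∈ faces, f.card = 3)
    (hconn : (skeleton faces).Connected)
    (W : Finset (Finset V))
    (hW : W = ((Finset.univ : Finset V).powersetCard 2).filter
      (fun e => ∃ f ∈ faces, e ⊆ f))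
    (δmin : ℕ)
    (hδ : IsLeast {m : ℕ | ∃ v : V, m = (W.filter (fun e => v ∈ e)).card} δmin)
    (A : Finset V) (hA1 : 0 < A.card) (hA2 : A.card < Fintype.card V)
    (hmin : ∀ A' : Finset V, 0 < A'.card → A'.card < Fintype.card V →
      ((Fintype.card V : ℝ) *
          ((faces.filter (fun f => (∃ v ∈ f, v ∈ A) ∧ (∃ v ∈ f, v ∉ A))).card : ℝ)) /
        ((A.card : ℝ) * ((Fintype.card V : ℝ) - (A.card : ℝ))) ≤
      ((Fintype.card V : ℝ) *
          ((faces.filter (fun f => (∃ v ∈ f, v ∈ A') ∧ (∃ v ∈ f, v ∉ A'))).card : ℝ)) /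
        ((A'.card : ℝ) * ((Fintype.card V : ℝ) - (A'.card : ℝ)))) :
    ∃ B ⊆ W, 0 < B.card ∧ B.card < W.card ∧
      (((B ×ˢ (W \ B)).filter
          (fun p => p.1 ≠ p.2 ∧ ∃ f ∈ faces, p.1 ⊆ f ∧ p.2 ⊆ f)).card : ℝ) / 2 ≤
        ((faces.filter (fun f => (∃ v ∈ f, v ∈ A) ∧ (∃ v ∈ f, v ∉ A))).card : ℝ) ∧
      A.card ≤ B.card ∧
      ((Aᶜ.card : ℝ)) ≤ 2 * ((W \ B).card : ℝ) / (δmin : ℝ) := by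
  obtain rfl : W = skeletonEdges faces := hW
  obtain ⟨x₀, hx₀⟩ := card_pos.1 hA1
  obtain ⟨y₀, hy₀⟩ : Aᶜ.Nonempty := by rw [← card_pos, card_compl]; omega
  obtain ⟨x, hxA, y, hyA, hxy⟩ :=
    hconn.preconnected.exists_adj_of_mem_of_notMem (s := (A : Set V)) hx₀ (mem_compl.1 hy₀)
  obtain ⟨u, huA, v, hvA, huv, hne⟩ := exists_adj_ne_of_adj hpure hxy hxA hyA
  set B := insert {x, y} (insideEdges faces A)
  have hBW : B ⊆ skeletonEdges faces :=
    insert_subset (pair_mem_skeletonEdges hxy) (filter_subset _ _)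
  have he₁ : {u, v} ∈ skeletonEdges faces \ B := pair_mem_sdiff_insert_insideEdges huv hvA hne
  have : Nontrivial V := ⟨⟨x, y, hxy.ne⟩⟩
  have hδ0 : 0 < δmin := by
    obtain ⟨w, rfl⟩ := hδ.1
    exact card_filter_mem_skeletonEdges_pos hconn w
  refine ⟨B, hBW, card_pos.2 ⟨_, mem_insert_self _ _⟩,
    card_lt_card ((ssubset_iff_of_subset hBW).2 ⟨_, mem_sdiff.1 he₁⟩), ?_, ?_, ?_⟩
  · change (#(edgeBoundary faces (skeletonEdges faces) B) : ℝ) / 2 ≤ #(crossingFaces faces A)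
    rw [div_le_iff₀ two_pos, mul_comm]
    exact_mod_cast card_edgeBoundary_le hpure (exists_mem_of_mem_insert_insideEdges hxA)
      (fun e he heA => mem_insert_of_mem (mem_filter.2 ⟨he, heA⟩)) hBW
  · rw [card_insert_of_notMem (pair_notMem_insideEdges hyA)]
    exact card_le_card_insideEdges_add_one (induce_connected_of_forall_cheegerRatio_le
      (crossingFaces_nonempty_of_adj hxy hxA hyA) ⟨x₀, hx₀⟩ hA2 hmin)
  · rw [le_div_iff₀ (by exact_mod_cast hδ0), mul_comm]
    exact_mod_cast mul_card_compl_le (fun e he => (mem_skeletonEdges.1 he).1)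
      (fun w => hδ.2 ⟨w, rfl⟩) hBW (sum_card_sdiff_insert_insideEdges hxA hyA).le he₁
      (by simp [pair_sdiff_of_mem_of_notMem huA hvA])

theorem stmt12 {V : Type*} [Fintype V] [DecidableEq V]
    (faces : Finset (Finset V))
    (hpure : ∀ f ∈ faces, f.card = 3)
    (hcover : ∀ v : V, ∃ f ∈ faces, v ∈ f)
    (hconn : (skeleton faces).Connected)
    (W : Finset (Finset V))
    (hW : W = ((Finset.univ : Finset V).powersetCard 2).filter
      (fun e => ∃ f ∈ faces, e ⊆ f))
    (δmin : ℕ)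
    (hδ : IsLeast {m : ℕ | ∃ v : V, m = (W.filter (fun e => v ∈ e)).card} δmin)
    (A : Finset V) (hA1 : 0 < A.card) (hA2 : A.card < Fintype.card V)
    (hmin : ∀ A' : Finset V, 0 < A'.card → A'.card < Fintype.card V →
      ((Fintype.card V : ℝ) *
          ((faces.filter (fun f => (∃ v ∈ f, v ∈ A) ∧ (∃ v ∈ f, v ∉ A))).card : ℝ)) /
        ((A.card : ℝ) * ((Fintype.card V : ℝ) - (A.card : ℝ))) ≤
      ((Fintype.card V : ℝ) *
          ((faces.filter (fun f => (∃ v ∈ f, v ∈ A') ∧ (∃ v ∈ f, v ∉ A'))).card : ℝ)) /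
        ((A'.card : ℝ) * ((Fintype.card V : ℝ) - (A'.card : ℝ)))) :
    ∃ B ⊆ W, 0 < B.card ∧ B.card < W.card ∧
      (((B ×ˢ (W \ B)).filter
          (fun p => p.1 ≠ p.2 ∧ ∃ f ∈ faces, p.1 ⊆ f ∧ p.2 ⊆ f)).card : ℝ) / 2 ≤
        ((faces.filter (fun f => (∃ v ∈ f, v ∈ A) ∧ (∃ v ∈ f, v ∉ A))).card : ℝ) ∧
      A.card ≤ B.card ∧
      ((Aᶜ.card : ℝ)) ≤ 2 * ((W \ B).card : ℝ) / (δmin : ℝ) :=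
  stmt12_general faces hpure hconn W hW δmin hδ A hA1 hA2 hmin
end

section
/- Let $X$ be a finite connected pure 2-dimensional simplicial complex with vertex set $V$ and let $A \subsetneq V$ be nonempty such that the induced subgraph of the 1-skeleton on $A$ is connected. Construct $B$ from the edges of $X$: all edges with both endpoints in $A$, plus exactly one edge with endpoints in both $A$ and $V \setminus A$. Let $F'$ be the set of 2-faces of $X$ containing at least one edge of $E(B, W \setminus B)$ in the embedded graph. Then every 2-face in $F'$ contains at least two edges of $E(B, W\setminus B)$, and hence $|E(B, W \setminus B)| \leq 2|F(A, V\setminus A)|$. -/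
open scoped Classical

/-!
Every crossing pair `(e, e')` (with `e ∈ B`, `e' ∈ W \ B`, both edges of a common triangle) lies
in exactly one triangle, namely `e ∪ e'`. Inside a triangle the three edges split as `a + b = 3`
between `B` and its complement, giving `a * b ∈ {0, 2}` crossing pairs. For the particular `B`,
the edge `e ∈ B` meets `A` and the edge `e' ∉ B` leaves `A`, so the triangle `e ∪ e'` meets both
`A` and `V \ A`; counting crossing pairs by their triangle gives the bound.
-/

open Finset

lemma Finset.card_filter_product_filter_not_eq_zero_or_two {α : Type*} {s : Finset α}
    (p : α → Prop) [DecidablePred p] (hs : s.card = 3) :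
    (s.filter p ×ˢ s.filter (fun a => ¬ p a)).card = 0 ∨
      (s.filter p ×ˢ s.filter (fun a => ¬ p a)).card = 2 := by
  have hsplit := card_filter_add_card_filter_not (s := s) p
  rw [card_product]
  generalize (s.filter p).card = a at hsplit ⊢
  generalize (s.filter fun a => ¬ p a).card = b at hsplit ⊢
  have ha : a ≤ 3 := by omega
  interval_cases a <;> omega

lemma Finset.union_eq_of_card_eq_of_card_eq_succ {α : Type*} [DecidableEq α] {s t g : Finset α}
    {n : ℕ} (hs : s.card = n) (ht : t.card = n) (hst : s ≠ t) (hsg : s ⊆ g) (htg : t ⊆ g)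
    (hg : g.card = n + 1) : s ∪ t = g := by
  have hts : ¬ t ⊆ s := fun h => hst (eq_of_subset_of_card_le h (by omega)).symm
  have hlt : s.card < (s ∪ t).card :=
    card_lt_card <| ssubset_iff_subset_ne.2
      ⟨subset_union_left, fun h => hts (h ▸ subset_union_right)⟩
  exact eq_of_subset_of_card_le (union_subset hsg htg) (by omega)

section CrossingPairs

variable {V : Type*} [DecidableEq V]

/-- The edge boundary `E(B, W \ B)` of the embedded graph, as ordered pairs; `crossingPairsIn W B f`
is its part inside the 2-face `f`. -/
def crossingPairs (faces W B : Finset (Finset V)) : Finset (Finset V × Finset V) :=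
  (B ×ˢ (W \ B)).filter (fun p => p.1 ≠ p.2 ∧ ∃ g ∈ faces, p.1 ⊆ g ∧ p.2 ⊆ g)

def crossingPairsIn (W B : Finset (Finset V)) (f : Finset V) : Finset (Finset V × Finset V) :=
  (B ×ˢ (W \ B)).filter (fun p => p.1 ≠ p.2 ∧ p.1 ⊆ f ∧ p.2 ⊆ f)

variable {faces W B : Finset (Finset V)} {f : Finset V}

lemma crossingPairsIn_eq_product (hBW : B ⊆ W) (hW : ∀ e ∈ W, e.card = 2)
    (hfW : ∀ e ⊆ f, e.card = 2 → e ∈ W) :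
    crossingPairsIn W B f =
      (f.powersetCard 2).filter (· ∈ B) ×ˢ (f.powersetCard 2).filter (· ∉ B) := by
  ext ⟨e, e'⟩
  simp only [crossingPairsIn, mem_filter, mem_product, mem_sdiff, mem_powersetCard]
  constructor
  · rintro ⟨⟨heB, he'W, he'B⟩, -, hef, he'f⟩
    exact ⟨⟨⟨hef, hW _ (hBW heB)⟩, heB⟩, ⟨he'f, hW _ he'W⟩, he'B⟩
  · rintro ⟨⟨⟨hef, -⟩, heB⟩, ⟨he'f, he'card⟩, he'B⟩
    exact ⟨⟨heB, hfW _ he'f he'card, he'B⟩, fun h => he'B (h ▸ heB), hef, he'f⟩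

lemma card_crossingPairsIn_eq_zero_or_two (hf : f.card = 3) (hBW : B ⊆ W)
    (hW : ∀ e ∈ W, e.card = 2) (hfW : ∀ e ⊆ f, e.card = 2 → e ∈ W) :
    (crossingPairsIn W B f).card = 0 ∨ (crossingPairsIn W B f).card = 2 := by
  rw [crossingPairsIn_eq_product hBW hW hfW]
  exact card_filter_product_filter_not_eq_zero_or_two _ (by rw [card_powersetCard, hf]; rfl)

lemma union_mem_of_mem_crossingPairs (hpure : ∀ f ∈ faces, f.card = 3) (hBW : B ⊆ W)
    (hW : ∀ e ∈ W, e.card = 2) {p : Finset V × Finset V} (hp : p ∈ crossingPairs faces W B) :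
    p.1 ∪ p.2 ∈ faces := by
  simp only [crossingPairs, mem_filter, mem_product, mem_sdiff] at hp
  obtain ⟨⟨h1B, h2W, -⟩, hne, g, hg, h1g, h2g⟩ := hp
  rwa [union_eq_of_card_eq_of_card_eq_succ (hW _ (hBW h1B)) (hW _ h2W) hne h1g h2g (hpure g hg)]

lemma card_crossingPairs_le_two_mul (hpure : ∀ f ∈ faces, f.card = 3) (hBW : B ⊆ W)
    (hW : ∀ e ∈ W, e.card = 2) (hfW : ∀ f ∈ faces, ∀ e ⊆ f, e.card = 2 → e ∈ W)
    {F : Finset (Finset V)} (hF : F ⊆ faces)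
    (hmaps : ∀ p ∈ crossingPairs faces W B, p.1 ∪ p.2 ∈ F) :
    (crossingPairs faces W B).card ≤ 2 * F.card := by
  refine card_le_mul_card_image_of_maps_to hmaps 2 fun f hf => ?_
  have hfiber : (crossingPairs faces W B).filter (fun p => p.1 ∪ p.2 = f) ⊆
      crossingPairsIn W B f := by
    intro p hp
    simp only [crossingPairs, crossingPairsIn, mem_filter] at hp ⊢
    obtain ⟨⟨hpBW, hne, -⟩, rfl⟩ := hp
    exact ⟨hpBW, hne, subset_union_left, subset_union_right⟩
  have := card_crossingPairsIn_eq_zero_or_two (hpure f (hF hf)) hBW hW (hfW f (hF hf))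
  have := card_le_card hfiber
  omega

lemma union_meets_and_leaves_of_mem_crossingPairs {A e₀ : Finset V}
    (hW : ∀ e ∈ W, e.card = 2) (he₀ : ∃ v ∈ e₀, v ∈ A) (hB : B = W.filter (· ⊆ A) ∪ {e₀})
    {p : Finset V × Finset V} (hp : p ∈ crossingPairs faces W B) :
    (∃ v ∈ p.1 ∪ p.2, v ∈ A) ∧ (∃ v ∈ p.1 ∪ p.2, v ∉ A) := by
  simp only [crossingPairs, mem_filter, mem_product, mem_sdiff] at hp
  obtain ⟨⟨h1B, h2W, h2B⟩, -⟩ := hp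
  constructor
  · have h1A : ∃ v ∈ p.1, v ∈ A := by
      rcases mem_union.1 (hB ▸ h1B) with h | h
      · obtain ⟨h1W, h1A⟩ := mem_filter.1 h
        obtain ⟨v, hv⟩ := card_pos.1 (by rw [hW _ h1W]; omega : 0 < p.1.card)
        exact ⟨v, hv, h1A hv⟩
      · exact mem_singleton.1 h ▸ he₀
    obtain ⟨v, hv, hvA⟩ := h1A
    exact ⟨v, mem_union_left _ hv, hvA⟩
  · have h2A : ¬ p.2 ⊆ A := fun h => h2B (hB ▸ mem_union_left _ (mem_filter.2 ⟨h2W, h⟩))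
    obtain ⟨v, hv, hvA⟩ := not_subset.1 h2A
    exact ⟨v, mem_union_right _ hv, hvA⟩

end CrossingPairs

theorem stmt19_general {V : Type*} [Fintype V] [DecidableEq V]
    (faces : Finset (Finset V))
    (hpure : ∀ f ∈ faces, f.card = 3)
    (W : Finset (Finset V))
    (hW : W = ((Finset.univ : Finset V).powersetCard 2).filter
      (fun e => ∃ f ∈ faces, e ⊆ f))
    (A : Finset V)
    (e₀ : Finset V) (he₀ : e₀ ∈ W)
    (he₀mix : (∃ v ∈ e₀, v ∈ A) ∧ (∃ v ∈ e₀, v ∉ A))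
    (B : Finset (Finset V))
    (hB : B = W.filter (fun e => e ⊆ A) ∪ {e₀}) :
    (∀ f ∈ faces.filter (fun f => ∃ p ∈ (B ×ˢ (W \ B)).filter
        (fun p => p.1 ≠ p.2 ∧ ∃ g ∈ faces, p.1 ⊆ g ∧ p.2 ⊆ g),
        p.1 ⊆ f ∧ p.2 ⊆ f),
      2 ≤ ((B ×ˢ (W \ B)).filter
        (fun p => p.1 ≠ p.2 ∧ p.1 ⊆ f ∧ p.2 ⊆ f)).card) ∧
    ((B ×ˢ (W \ B)).filter
        (fun p => p.1 ≠ p.2 ∧ ∃ g ∈ faces, p.1 ⊆ g ∧ p.2 ⊆ g)).card ≤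
      2 * (faces.filter (fun f => (∃ v ∈ f, v ∈ A) ∧ (∃ v ∈ f, v ∉ A))).card := by
  have hWcard : ∀ e ∈ W, e.card = 2 := fun e he => by
    rw [hW, mem_filter, mem_powersetCard] at he
    exact he.1.2
  have hfW : ∀ f ∈ faces, ∀ e ⊆ f, e.card = 2 → e ∈ W := fun f hf e hef he => by
    rw [hW, mem_filter, mem_powersetCard]
    exact ⟨⟨subset_univ _, he⟩, f, hf, hef⟩
  have hBW : B ⊆ W := hB ▸ union_subset (filter_subset _ _) (singleton_subset_iff.2 he₀)
  refine ⟨fun f hf => ?_, card_crossingPairs_le_two_mul hpure hBW hWcard hfW (filter_subset _ _)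
    fun p hp => mem_filter.2 ⟨union_mem_of_mem_crossingPairs hpure hBW hWcard hp, ?_⟩⟩
  · obtain ⟨hf, p, hp, h1f, h2f⟩ := mem_filter.1 hf
    have hpf : p ∈ crossingPairsIn W B f :=
      mem_filter.2 ⟨(mem_filter.1 hp).1, (mem_filter.1 hp).2.1, h1f, h2f⟩
    rcases card_crossingPairsIn_eq_zero_or_two (hpure f hf) hBW hWcard (hfW f hf) with h | h
    · exact absurd (card_eq_zero.1 h ▸ hpf) (notMem_empty p)
    · exact h.ge
  · exact union_meets_and_leaves_of_mem_crossingPairs hWcard he₀mix.1 hB hp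

theorem stmt19 {V : Type*} [Fintype V] [DecidableEq V]
    (faces : Finset (Finset V))
    (hpure : ∀ f ∈ faces, f.card = 3)
    (hcover : ∀ v : V, ∃ f ∈ faces, v ∈ f)
    (hconn : (skeleton faces).Connected)
    (W : Finset (Finset V))
    (hW : W = ((Finset.univ : Finset V).powersetCard 2).filter
      (fun e => ∃ f ∈ faces, e ⊆ f))
    (A : Finset V) (hA1 : A.Nonempty) (hA2 : A ≠ Finset.univ)
    (hAconn : ((skeleton faces).induce (↑A : Set V)).Connected)
    (e₀ : Finset V) (he₀ : e₀ ∈ W)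
    (he₀mix : (∃ v ∈ e₀, v ∈ A) ∧ (∃ v ∈ e₀, v ∉ A))
    (B : Finset (Finset V))
    (hB : B = W.filter (fun e => e ⊆ A) ∪ {e₀}) :
    (∀ f ∈ faces.filter (fun f => ∃ p ∈ (B ×ˢ (W \ B)).filter
        (fun p => p.1 ≠ p.2 ∧ ∃ g ∈ faces, p.1 ⊆ g ∧ p.2 ⊆ g),
        p.1 ⊆ f ∧ p.2 ⊆ f),
      2 ≤ ((B ×ˢ (W \ B)).filter
        (fun p => p.1 ≠ p.2 ∧ p.1 ⊆ f ∧ p.2 ⊆ f)).card) ∧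
    ((B ×ˢ (W \ B)).filter
        (fun p => p.1 ≠ p.2 ∧ ∃ g ∈ faces, p.1 ⊆ g ∧ p.2 ⊆ g)).card ≤
      2 * (faces.filter (fun f => (∃ v ∈ f, v ∈ A) ∧ (∃ v ∈ f, v ∉ A))).card :=
  stmt19_general faces hpure W hW A e₀ he₀ he₀mix B hB
end
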